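/- Let u : [a,b] → ℝ be Hölder continuous of order r ∈ (0,1] with constant H, and let f : [a,b] → ℝ be of bounded variation on [a,b]. Then for all a ≤ t₀ ≤ x ≤ t₁ ≤ b, |∫ₐᵇ f du − [u(x) − u(a)]·f(t₀) − [u(b) − u(x)]·f(t₁)| ≤ H · max{ t₀ − a, (t₁ − t₀)/2 + |x − (t₀+t₁)/2|, b − t₁ }^r · V(f;[a,b]). -/

import Mathlib

/-- A tagged partition of the interval `[a, b]`. -/
structure TaggedPartition (a b : ℝ) where
  n : ℕ
  pts : ℕ → ℝ
  tag : ℕ → ℝ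
  mono : ∀ i, pts i ≤ pts (i + 1)
  first : pts 0 = a
  last : pts n = b
  tag_mem : ∀ i, pts i ≤ tag i ∧ tag i ≤ pts (i + 1)

/-- The Riemann–Stieltjes sum of `f` with respect to `u` over a tagged partition. -/
def RSsum (f u : ℝ → ℝ) {a b : ℝ} (P : TaggedPartition a b) : ℝ :=
  ∑ i ∈ Finset.range P.n, f (P.tag i) * (u (P.pts (i + 1)) - u (P.pts i))

/-- `IsRSIntegral f u a b I` means the Riemann–Stieltjes integral `∫ₐᵇ f du` exists
and equals `I`: Riemann–Stieltjes sums converge to `I` as the mesh tends to `0`. -/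
def IsRSIntegral (f u : ℝ → ℝ) (a b I : ℝ) : Prop :=
  ∀ ε > 0, ∃ δ > 0, ∀ P : TaggedPartition a b,
    (∀ i < P.n, P.pts (i + 1) - P.pts i < δ) → |RSsum f u P - I| < ε

/-- The total (Jordan) variation of `u` on `[a, b]`. -/
noncomputable def totalVar (u : ℝ → ℝ) (a b : ℝ) : ℝ :=
  (eVariationOn u (Set.Icc a b)).toReal

/-! Cut `[a, b]` at `x` and take δ-fine tagged partitions of `[a, x]` and `[x, b]` whose tags
lean towards `t0`, resp. `t1`: right endpoints on `[a, t0]` and `[x, t1]`, left endpoints on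
`[t0, x]` and `[t1, b]`. On each of these four pieces, summation by parts writes the error of the
Riemann–Stieltjes sum as `∑ (u y - u e) (f yᵢ - f yᵢ₊₁)`, with `y` a node and `e` the endpoint of
the piece away from the tag point. Since `|y - e|` is at most the length of the piece, which is
at most `M`, the error is at most `H M ^ r` times the variation of `f` along the partition.
Letting `δ → 0` gives the same bound for the integral. -/
open Finset

namespace TaggedPartition

variable {a b c δ : ℝ}

def MeshLT (P : TaggedPartition a b) (δ : ℝ) : Prop :=
  ∀ i < P.n, P.pts (i + 1) - P.pts i < δ

def variationSum (P : TaggedPartition a b) (f : ℝ → ℝ) : ℝ :=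
  ∑ i ∈ range P.n, |f (P.pts (i + 1)) - f (P.pts i)|

lemma monotone_pts (P : TaggedPartition a b) : Monotone P.pts :=
  monotone_nat_of_le_succ P.mono

lemma pts_mem_Icc (P : TaggedPartition a b) {i : ℕ} (hi : i ≤ P.n) : P.pts i ∈ Set.Icc a b :=
  ⟨P.first.symm.trans_le (P.monotone_pts i.zero_le), (P.monotone_pts hi).trans_eq P.last⟩

lemma variationSum_nonneg (P : TaggedPartition a b) (f : ℝ → ℝ) : 0 ≤ P.variationSum f :=
  sum_nonneg fun _ _ => abs_nonneg _

lemma variationSum_le_totalVar (P : TaggedPartition a b) {f : ℝ → ℝ}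
    (hf : BoundedVariationOn f (Set.Icc a b)) : P.variationSum f ≤ totalVar f a b := by
  have hsum := eVariationOn.sum_le_of_monotoneOn_Iic (f := f) (n := P.n)
    (P.monotone_pts.monotoneOn _) fun i hi => P.pts_mem_Icc hi
  calc P.variationSum f = (∑ i ∈ range P.n, edist (f (P.pts (i + 1))) (f (P.pts i))).toReal := by
        rw [ENNReal.toReal_sum fun _ _ => edist_ne_top _ _, variationSum]
        simp only [← dist_edist, Real.dist_eq]
    _ ≤ totalVar f a b := ENNReal.toReal_mono hf hsum

def appendPts (P : TaggedPartition a c) (Q : TaggedPartition c b) (i : ℕ) : ℝ :=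
  if i ≤ P.n then P.pts i else Q.pts (i - P.n)

lemma appendPts_of_le (P : TaggedPartition a c) (Q : TaggedPartition c b) {i : ℕ}
    (hi : i ≤ P.n) : appendPts P Q i = P.pts i :=
  if_pos hi

lemma appendPts_add (P : TaggedPartition a c) (Q : TaggedPartition c b) (j : ℕ) :
    appendPts P Q (P.n + j) = Q.pts j := by
  rcases j.eq_zero_or_pos with rfl | hj
  · simp [appendPts, P.last, Q.first]
  · rw [appendPts, if_neg (by omega), Nat.add_sub_cancel_left]

lemma appendPts_of_ge (P : TaggedPartition a c) (Q : TaggedPartition c b) {i : ℕ}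
    (hi : P.n ≤ i) : appendPts P Q i = Q.pts (i - P.n) := by
  obtain ⟨j, rfl⟩ := Nat.exists_eq_add_of_le hi
  simp [appendPts_add]

def append (P : TaggedPartition a c) (Q : TaggedPartition c b) : TaggedPartition a b where
  n := P.n + Q.n
  pts := appendPts P Q
  tag i := if i < P.n then P.tag i else Q.tag (i - P.n)
  mono i := by
    rcases Nat.lt_or_ge i P.n with hi | hi
    · rw [appendPts_of_le P Q hi.le, appendPts_of_le P Q hi]
      exact P.mono i
    · rw [appendPts_of_ge P Q hi, appendPts_of_ge P Q (by omega), Nat.sub_add_comm hi]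
      exact Q.mono _
  first := by rw [appendPts_of_le P Q (Nat.zero_le _), P.first]
  last := by rw [appendPts_add, Q.last]
  tag_mem i := by
    rcases Nat.lt_or_ge i P.n with hi | hi
    · rw [if_pos hi, appendPts_of_le P Q hi.le, appendPts_of_le P Q hi]
      exact P.tag_mem i
    · rw [if_neg (by omega), appendPts_of_ge P Q hi, appendPts_of_ge P Q (by omega),
        Nat.sub_add_comm hi]
      exact Q.tag_mem _

lemma sum_append (P : TaggedPartition a c) (Q : TaggedPartition c b) (g : ℝ → ℝ → ℝ → ℝ) :
    ∑ i ∈ range (P.append Q).n,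
        g ((P.append Q).tag i) ((P.append Q).pts i) ((P.append Q).pts (i + 1))
      = ∑ i ∈ range P.n, g (P.tag i) (P.pts i) (P.pts (i + 1))
        + ∑ i ∈ range Q.n, g (Q.tag i) (Q.pts i) (Q.pts (i + 1)) := by
  simp only [append, sum_range_add]
  congr 1
  · refine sum_congr rfl fun i hi => ?_
    have hi : i < P.n := mem_range.1 hi
    rw [if_pos hi, appendPts_of_le P Q hi.le, appendPts_of_le P Q hi]
  · refine sum_congr rfl fun j _ => ?_
    rw [if_neg (by omega), appendPts_add, add_assoc, appendPts_add, Nat.add_sub_cancel_left]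

lemma RSsum_append (f u : ℝ → ℝ) (P : TaggedPartition a c) (Q : TaggedPartition c b) :
    RSsum f u (P.append Q) = RSsum f u P + RSsum f u Q :=
  sum_append P Q fun t s s' => f t * (u s' - u s)

lemma variationSum_append (f : ℝ → ℝ) (P : TaggedPartition a c) (Q : TaggedPartition c b) :
    (P.append Q).variationSum f = P.variationSum f + Q.variationSum f :=
  sum_append P Q fun _ s s' => |f s' - f s|

lemma MeshLT.append {P : TaggedPartition a c} {Q : TaggedPartition c b} (hP : P.MeshLT δ)
    (hQ : Q.MeshLT δ) : (P.append Q).MeshLT δ := by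
  intro i hi
  change appendPts P Q (i + 1) - appendPts P Q i < δ
  rcases Nat.lt_or_ge i P.n with hi' | hi'
  · rw [appendPts_of_le P Q hi', appendPts_of_le P Q hi'.le]
    exact hP i hi'
  · obtain ⟨j, rfl⟩ := Nat.exists_eq_add_of_le hi'
    rw [add_assoc, appendPts_add, appendPts_add]
    exact hQ j (by change P.n + j < P.n + Q.n at hi; omega)

lemma exists_meshLT (h : a ≤ b) (hδ : 0 < δ) (τ : ℝ → ℝ → ℝ)
    (hτ : ∀ l r, l ≤ r → τ l r ∈ Set.Icc l r) :
    ∃ P : TaggedPartition a b, P.MeshLT δ ∧ ∀ i, P.tag i = τ (P.pts i) (P.pts (i + 1)) := by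
  obtain ⟨k, hk⟩ := exists_nat_gt ((b - a) / δ)
  have hk0 : (0 : ℝ) < k := (div_nonneg (sub_nonneg.2 h) hδ.le).trans_lt hk
  have hstep₀ : 0 ≤ (b - a) / k := div_nonneg (sub_nonneg.2 h) hk0.le
  have hstep : (b - a) / k < δ := by
    rw [div_lt_iff₀ hk0, mul_comm]; rwa [div_lt_iff₀ hδ] at hk
  set p : ℕ → ℝ := fun i => min (a + i * ((b - a) / k)) b
  have hp : Monotone p := fun i j hij => by
    simp only [p]
    gcongr
  refine ⟨{ n := k
            pts := p
            tag i := τ (p i) (p (i + 1))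
            mono i := hp i.le_succ
            first := by simp [p, h]
            last := ?_
            tag_mem i := hτ _ _ (hp i.le_succ) }, fun i _ => ?_, fun _ => rfl⟩
  · simp only [p]
    rw [mul_div_cancel₀ _ hk0.ne', add_sub_cancel, min_self]
  · calc p (i + 1) - p i ≤ (b - a) / k := by
          simp only [p, Nat.cast_succ, add_mul, one_mul, ← add_assoc, sub_le_iff_le_add']
          rw [← min_add_add_right]
          exact min_le_min_left _ (by linarith)
      _ < δ := hstep

variable {f u : ℝ → ℝ} {A B C : ℝ}

lemma abs_sum_mul_le_variationSum (P : TaggedPartition a b) (w : ℕ → ℝ)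
    (hw : ∀ i < P.n, |w i| ≤ C) :
    |∑ i ∈ range P.n, w i * (f (P.pts i) - f (P.pts (i + 1)))| ≤ C * P.variationSum f := by
  rw [variationSum, mul_sum]
  refine (abs_sum_le_sum_abs _ _).trans (sum_le_sum fun i hi => ?_)
  rw [abs_mul, abs_sub_comm]
  exact mul_le_mul_of_nonneg_right (hw i (mem_range.1 hi)) (abs_nonneg _)

lemma abs_RSsum_sub_le_of_tag_eq_right (P : TaggedPartition a b)
    (htag : ∀ i, P.tag i = P.pts (i + 1)) (hC : ∀ t ∈ Set.Icc a b, |u t - u a| ≤ C) :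
    |RSsum f u P - (u b - u a) * f b| ≤ C * P.variationSum f := by
  have htele := sum_range_sub (fun i => (u (P.pts i) - u a) * f (P.pts i)) P.n
  simp only [P.first, P.last, sub_self, zero_mul, sub_zero] at htele
  rw [← htele, RSsum, ← sum_sub_distrib]
  convert abs_sum_mul_le_variationSum P (fun i => u (P.pts i) - u a)
    (fun i hi => hC _ (P.pts_mem_Icc hi.le)) using 3 with i
  rw [htag]
  ring

lemma abs_RSsum_sub_le_of_tag_eq_left (P : TaggedPartition a b)
    (htag : ∀ i, P.tag i = P.pts i) (hC : ∀ t ∈ Set.Icc a b, |u t - u b| ≤ C) :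
    |RSsum f u P - (u b - u a) * f a| ≤ C * P.variationSum f := by
  have htele := sum_range_sub (fun i => (u (P.pts i) - u b) * f (P.pts i)) P.n
  simp only [P.first, P.last, sub_self, zero_mul, zero_sub, ← neg_mul, neg_sub] at htele
  rw [← htele, RSsum, ← sum_sub_distrib]
  convert abs_sum_mul_le_variationSum P (fun i => u (P.pts (i + 1)) - u b)
    (fun i hi => hC _ (P.pts_mem_Icc hi)) using 3 with i
  rw [htag]
  ring

lemma abs_RSsum_append_sub_le {P : TaggedPartition a c}
    {Q : TaggedPartition c b} (hP : |RSsum f u P - A| ≤ C * P.variationSum f)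
    (hQ : |RSsum f u Q - B| ≤ C * Q.variationSum f) :
    |RSsum f u (P.append Q) - (A + B)| ≤ C * (P.append Q).variationSum f := by
  rw [RSsum_append, variationSum_append, mul_add, add_sub_add_comm]
  exact (abs_add_le _ _).trans (add_le_add hP hQ)

end TaggedPartition

section

variable {a b c δ C A B : ℝ} {f u : ℝ → ℝ}

lemma exists_meshLT_abs_RSsum_sub_le (hac : a ≤ c) (hcb : c ≤ b) (hδ : 0 < δ)
    (hleft : ∀ t ∈ Set.Icc a c, |u t - u a| ≤ C) (hright : ∀ t ∈ Set.Icc c b, |u t - u b| ≤ C) :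
    ∃ P : TaggedPartition a b, P.MeshLT δ ∧
      |RSsum f u P - (u b - u a) * f c| ≤ C * P.variationSum f := by
  obtain ⟨P, hPδ, hPtag⟩ := TaggedPartition.exists_meshLT hac hδ (fun _ r => r)
    fun _ _ hlr => ⟨hlr, le_rfl⟩
  obtain ⟨Q, hQδ, hQtag⟩ := TaggedPartition.exists_meshLT hcb hδ (fun l _ => l)
    fun _ _ hlr => ⟨le_rfl, hlr⟩
  refine ⟨P.append Q, hPδ.append hQδ, ?_⟩
  convert TaggedPartition.abs_RSsum_append_sub_le
    (P.abs_RSsum_sub_le_of_tag_eq_right hPtag hleft)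
    (Q.abs_RSsum_sub_le_of_tag_eq_left hQtag hright) using 2
  ring

lemma exists_meshLT_abs_RSsum_sub_le_of_holder {H r : ℝ} (hH : 0 ≤ H) (hr : 0 ≤ r)
    (hu : ∀ s ∈ Set.Icc a b, ∀ t ∈ Set.Icc a b, |u s - u t| ≤ H * |s - t| ^ r)
    (hac : a ≤ c) (hcb : c ≤ b) (hδ : 0 < δ) :
    ∃ P : TaggedPartition a b, P.MeshLT δ ∧
      |RSsum f u P - (u b - u a) * f c| ≤ H * max (c - a) (b - c) ^ r * P.variationSum f := by
  have hab : a ≤ b := hac.trans hcb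
  refine exists_meshLT_abs_RSsum_sub_le hac hcb hδ (fun t ht => ?_) (fun t ht => ?_)
  · refine (hu t ⟨ht.1, ht.2.trans hcb⟩ a ⟨le_rfl, hab⟩).trans ?_
    gcongr
    rw [abs_of_nonneg (sub_nonneg.2 ht.1)]
    exact le_max_of_le_left (by linarith [ht.2])
  · refine (hu t ⟨hac.trans ht.1, ht.2⟩ b ⟨hab, le_rfl⟩).trans ?_
    gcongr
    rw [abs_sub_comm, abs_of_nonneg (sub_nonneg.2 ht.2)]
    exact le_max_of_le_right (by linarith [ht.1])

lemma IsRSIntegral.abs_sub_le_of_exists_meshLT {I : ℝ} (hI : IsRSIntegral f u a b I)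
    (h : ∀ δ > 0, ∃ P : TaggedPartition a b, P.MeshLT δ ∧ |RSsum f u P - A| ≤ B) :
    |I - A| ≤ B := by
  refine le_of_forall_pos_le_add fun ε hε => ?_
  obtain ⟨δ, hδ, hIδ⟩ := hI ε hε
  obtain ⟨P, hPδ, hP⟩ := h δ hδ
  calc |I - A| ≤ |I - RSsum f u P| + |RSsum f u P - A| := _root_.abs_sub_le _ _ _
    _ ≤ B + ε := by rw [abs_sub_comm]; linarith [hIδ P hPδ]

end

theorem two_point_quadrature_dual_bounded_variation_general
    (a b H r t0 x t1 I : ℝ) (f u : ℝ → ℝ)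
    (hr : 0 < r) (hH : 0 ≤ H)
    (hu : ∀ s ∈ Set.Icc a b, ∀ t ∈ Set.Icc a b, |u s - u t| ≤ H * |s - t| ^ r)
    (hf : BoundedVariationOn f (Set.Icc a b))
    (ht0 : a ≤ t0) (ht0x : t0 ≤ x) (hxt1 : x ≤ t1) (ht1 : t1 ≤ b)
    (hI : IsRSIntegral f u a b I) :
    |I - (u x - u a) * f t0 - (u b - u x) * f t1| ≤
      H * (max (t0 - a) (max ((t1 - t0) / 2 + |x - (t0 + t1) / 2|) (b - t1))) ^ r *
        totalVar f a b := by
  set M := max (t0 - a) (max ((t1 - t0) / 2 + |x - (t0 + t1) / 2|) (b - t1))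
  have hmid : max (x - t0) (t1 - x) = (t1 - t0) / 2 + |x - (t0 + t1) / 2| := by
    rcases le_total x ((t0 + t1) / 2) with h | h
    · rw [abs_of_nonpos (by linarith), max_eq_right (by linarith)]; ring
    · rw [abs_of_nonneg (by linarith), max_eq_left (by linarith)]; ring
  have hmidM : max (x - t0) (t1 - x) ≤ M := hmid ▸ (le_max_left _ _).trans (le_max_right _ _)
  have hM₁ : max (t0 - a) (x - t0) ≤ M :=
    max_le (le_max_left _ _) ((le_max_left _ _).trans hmidM)
  have hM₂ : max (t1 - x) (b - t1) ≤ M :=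
    max_le ((le_max_right _ _).trans hmidM) ((le_max_right _ _).trans (le_max_right _ _))
  have hu_sub : ∀ {α β}, a ≤ α → β ≤ b →
      ∀ s ∈ Set.Icc α β, ∀ t ∈ Set.Icc α β, |u s - u t| ≤ H * |s - t| ^ r :=
    fun hα hβ s hs t ht => hu s (Set.Icc_subset_Icc hα hβ hs) t (Set.Icc_subset_Icc hα hβ ht)
  rw [sub_sub]
  refine hI.abs_sub_le_of_exists_meshLT fun δ hδ => ?_
  obtain ⟨P, hPδ, hP⟩ := exists_meshLT_abs_RSsum_sub_le_of_holder (f := f) hH hr.le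
    (hu_sub le_rfl (by linarith)) ht0 ht0x hδ
  obtain ⟨Q, hQδ, hQ⟩ := exists_meshLT_abs_RSsum_sub_le_of_holder (f := f) hH hr.le
    (hu_sub (by linarith) le_rfl) hxt1 ht1 hδ
  refine ⟨P.append Q, hPδ.append hQδ, ?_⟩
  calc _ ≤ H * M ^ r * (P.append Q).variationSum f :=
        TaggedPartition.abs_RSsum_append_sub_le
          (hP.trans (by gcongr; exact P.variationSum_nonneg f))
          (hQ.trans (by gcongr; exact Q.variationSum_nonneg f))
    _ ≤ H * M ^ r * totalVar f a b := by
        gcongr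
        exact (P.append Q).variationSum_le_totalVar hf

theorem two_point_quadrature_dual_bounded_variation
    (a b H r t0 x t1 I : ℝ) (f u : ℝ → ℝ)
    (hr : 0 < r) (hr1 : r ≤ 1) (hH : 0 ≤ H)
    (hu : ∀ s ∈ Set.Icc a b, ∀ t ∈ Set.Icc a b, |u s - u t| ≤ H * |s - t| ^ r)
    (hf : BoundedVariationOn f (Set.Icc a b))
    (ht0 : a ≤ t0) (ht0x : t0 ≤ x) (hxt1 : x ≤ t1) (ht1 : t1 ≤ b)
    (hI : IsRSIntegral f u a b I) :
    |I - (u x - u a) * f t0 - (u b - u x) * f t1| ≤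
      H * (max (t0 - a) (max ((t1 - t0) / 2 + |x - (t0 + t1) / 2|) (b - t1))) ^ r *
        totalVar f a b :=
  two_point_quadrature_dual_bounded_variation_general a b H r t0 x t1 I f u hr hH hu hf ht0 ht0x
    hxt1 ht1 hI
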